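/- Let s = (s₁,s₂,s₃) ∈ ℝ³ with s₁,s₂,s₃ > 0. Then the following are equivalent: (i) p_r(s) ≥ 0 for all r = 1,2,3; (ii) there exists a = (a₁,a₂,a₃) ∈ ℝ³ such that M₂₄(s,a) is positive semidefinite, s_{r+1} + s_{r+2} - s_r + 3S(s)/(2s_r) + 7a_r ≥ 0 for all r, and a_r ≤ a_r⁰(s) for all r. (This is the matrix-level statement that g_s on W²⁴ has strongly nonnegative curvature if and only if it has sec ≥ 0.) -/

import Mathlib

/-!
Take `a = a⁰(s)`. The linear condition at `a⁰` equals `2 p_r(s) / s_r` and increases with `a_r`,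
so any admissible `a ≤ a⁰` forces `p_r(s) ≥ 0`. Conversely, if all `p_r(s) ≥ 0` then
`S(s) = p₁ + p₂ + p₃ ≥ 0`, and `M₂₄(s, a⁰)` is positive semidefinite: completing the square in
the first coordinate leaves a Schur complement of rank one with coefficient `S(s)`.
-/

open Matrix

/-- `S(s) = 2(s₁s₂+s₁s₃+s₂s₃) - (s₁²+s₂²+s₃²)`. -/
noncomputable def Spoly (s : Fin 3 → ℝ) : ℝ :=
  2 * (s 0 * s 1 + s 0 * s 2 + s 1 * s 2) - (s 0 ^ 2 + s 1 ^ 2 + s 2 ^ 2)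

/-- `p_r(s) = (s_{r+1}-s_{r+2})² + 2 s_r (s_{r+1}+s_{r+2}) - 3 s_r²`, indices mod 3. -/
noncomputable def ppoly (s : Fin 3 → ℝ) (r : Fin 3) : ℝ :=
  (s (r + 1) - s (r + 2)) ^ 2 + 2 * s r * (s (r + 1) + s (r + 2)) - 3 * s r ^ 2

/-- `a_r⁰(s) = ((s_{r+1}-s_{r+2})² - s_r²)/(2 s_r)`, indices mod 3. -/
noncomputable def a0 (s : Fin 3 → ℝ) (r : Fin 3) : ℝ :=
  ((s (r + 1) - s (r + 2)) ^ 2 - s r ^ 2) / (2 * s r)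

/-- First block of the modified curvature operator of `(W²⁴, g_s)`. -/
noncomputable def M24 (s a : Fin 3 → ℝ) : Matrix (Fin 3) (Fin 3) ℝ :=
  !![4 * s 0,                   Spoly s / s 2 - 2 * a 2,  Spoly s / s 1 - 2 * a 1;
     Spoly s / s 2 - 2 * a 2,   4 * s 1,                  Spoly s / s 0 - 2 * a 0;
     Spoly s / s 1 - 2 * a 1,   Spoly s / s 0 - 2 * a 0,  4 * s 2]

lemma Spoly_eq_sum_ppoly (s : Fin 3 → ℝ) : Spoly s = ppoly s 0 + ppoly s 1 + ppoly s 2 := by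
  simp [Spoly, ppoly]
  ring

lemma Spoly_eq_cyclic (s : Fin 3 → ℝ) (r : Fin 3) :
    Spoly s = 2 * (s r * s (r + 1) + s r * s (r + 2) + s (r + 1) * s (r + 2))
      - (s r ^ 2 + s (r + 1) ^ 2 + s (r + 2) ^ 2) := by
  fin_cases r <;> simp [Spoly] <;> ring

lemma linear_term_a0_eq (s : Fin 3 → ℝ) (r : Fin 3) (hr : s r ≠ 0) :
    s (r + 1) + s (r + 2) - s r + 3 * Spoly s / (2 * s r) + 7 * a0 s r
      = 2 * ppoly s r / s r := by
  rw [Spoly_eq_cyclic s r]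
  unfold a0 ppoly
  field_simp
  ring

lemma M24_isHermitian (s a : Fin 3 → ℝ) : (M24 s a).IsHermitian := by
  ext i j
  fin_cases i <;> fin_cases j <;> simp [M24]

lemma dotProduct_M24_a0_mulVec (s x : Fin 3 → ℝ) (hs : ∀ r, s r ≠ 0) :
    x ⬝ᵥ (M24 s (a0 s) *ᵥ x) =
      ((4 * s 0 * s 1 * s 2 * x 0
          + 2 * (s 2 * (s 0 + s 1) - (s 0 - s 1) ^ 2) * s 1 * x 1
          + 2 * (s 1 * (s 0 + s 2) - (s 0 - s 2) ^ 2) * s 2 * x 2) ^ 2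
        + 4 * Spoly s * (s 1 * (s 0 - s 1) * x 1 + s 2 * (s 0 - s 2) * x 2) ^ 2)
        / (4 * s 0 * s 1 ^ 2 * s 2 ^ 2) := by
  have := hs 0
  have := hs 1
  have := hs 2
  simp [M24, a0, Spoly, mulVec, dotProduct, Fin.sum_univ_three]
  field_simp
  ring

lemma M24_a0_posSemidef (s : Fin 3 → ℝ) (hs : ∀ r, 0 < s r) (hS : 0 ≤ Spoly s) :
    (M24 s (a0 s)).PosSemidef := by
  refine posSemidef_iff_dotProduct_mulVec.mpr ⟨M24_isHermitian s (a0 s), fun x => ?_⟩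
  rw [star_trivial, dotProduct_M24_a0_mulVec s x fun r => (hs r).ne']
  have := hs 0
  positivity

lemma ppoly_nonneg_of_le_a0 (s : Fin 3 → ℝ) (r : Fin 3) (hr : 0 < s r) {c : ℝ}
    (hlin : 0 ≤ s (r + 1) + s (r + 2) - s r + 3 * Spoly s / (2 * s r) + 7 * c)
    (hc : c ≤ a0 s r) : 0 ≤ ppoly s r := by
  have h : 0 ≤ 2 * ppoly s r / s r := by
    rw [← linear_term_a0_eq s r hr.ne']
    linarith
  have := (le_div_iff₀ hr).mp h
  linarith

/-- Matrix-level statement: `g_s` on `W²⁴` has strongly nonnegative curvature iff it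
has `sec ≥ 0`. -/
theorem stronglyNonneg_W24_iff (s : Fin 3 → ℝ) (hs : ∀ r, 0 < s r) :
    (∀ r, 0 ≤ ppoly s r) ↔
      ∃ a : Fin 3 → ℝ, (M24 s a).PosSemidef ∧
        (∀ r, 0 ≤ s (r + 1) + s (r + 2) - s r + 3 * Spoly s / (2 * s r) + 7 * a r) ∧
        (∀ r, a r ≤ a0 s r) := by
  constructor
  · intro hp
    have hS : 0 ≤ Spoly s := by
      rw [Spoly_eq_sum_ppoly]
      linarith [hp 0, hp 1, hp 2]
    refine ⟨a0 s, M24_a0_posSemidef s hs hS, fun r => ?_, fun r => le_rfl⟩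
    rw [linear_term_a0_eq s r (hs r).ne']
    have := hp r
    have := hs r
    positivity
  · rintro ⟨a, -, hlin, hle⟩ r
    exact ppoly_nonneg_of_le_a0 s r (hs r) (hlin r) (hle r)
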